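/- arXiv:1910.09335 — 2 statements merged into one kernel-verified Lean document; each statement's English description precedes it below -/
import Mathlib

section
/- The network-based redistribution mechanism (NRM) in trees is individually rational: for every agent i who reports her true valuation (v̂_i = v_i), whatever subset of her neighbours she invites and whatever the other agents report, her utility under NRM is nonnegative. In particular, every non-winning agent's utility equals the redistribution R_i ≥ 0 she receives (0 if she receives none), and the winner w's utility equals v_w − p^{auc}_w + R_w ≥ 0. -/
/-!
Every redistribution `R_q` is nonnegative: `q` and the vertex `a'_j` lie below the same
`a_{j-1}`, so their subtrees are inside `V_{a_{j-1}}`, and the highest bid outside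
`V_{a'_j} ∪ V_q` is at least the highest bid outside `V_{a_{j-1}}`, which is `p^{auc}_{a_{j-1}}`.
A non-winner's utility is her redistribution, and the winner `a_J` is only chosen when
`p^{auc}_{a_J} ≤ v̂_{a_J} = v_{a_J}`, so her utility `v_{a_J} - p^{auc}_{a_J} + R_{a_J}` is
nonnegative too.
-/

open Finset

attribute [local instance] Classical.propDecidable

noncomputable section

/-- A tree network rooted at a resource owner `o`: the agents are the elements of
the finite type `α`, and `parent i = none` means that the parent of agent `i` is
the owner `o` herself.  The field `depth` records the distance to the owner and
witnesses that the parent relation is well-founded. -/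
structure TreeNet (α : Type) [Fintype α] [DecidableEq α] where
  parent : α → Option α
  depth : α → ℕ
  depth_root : ∀ i, parent i = none → depth i = 0
  depth_child : ∀ i j, parent i = some j → depth i = depth j + 1

namespace TreeNet

variable {α : Type} [Fintype α] [DecidableEq α]

/-- `j` is a strict ancestor of `i`: iterating `parent` from `i` reaches `j`. -/
def StrictAnc (T : TreeNet α) (j i : α) : Prop :=
  ∃ m : ℕ, 0 < m ∧ (fun x : Option α => x.bind T.parent)^[m] (some i) = some j

/-- the subtree `V_i` of agent `i` inside the participant set `V`:
`i` together with all its descendants. -/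
def sub (T : TreeNet α) (V : Finset α) (i : α) : Finset α :=
  V.filter fun x => x = i ∨ T.StrictAnc i x

/-- `n_i`, the number of agents in the subtree of `i`. -/
def nsub (T : TreeNet α) (V : Finset α) (i : α) : ℕ := (T.sub V i).card

/-- `v^{(1)}_D`: the highest reported valuation in `D` (with the convention `0`
for `D = ∅`). -/
def vmax (val : α → ℝ) (D : Finset α) : ℝ :=
  if h : D.Nonempty then D.sup' h val else 0

/-- the list of strict ancestors of `i`, ordered by increasing depth. -/
def ancList (T : TreeNet α) (i : α) : List α :=
  match h : T.parent i with
  | none => []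
  | some j => T.ancList j ++ [j]
termination_by T.depth i
decreasing_by
  have := T.depth_child i j h
  omega

/-- the full sequence `a_1, …, a_{k+1}`: the strict ancestors of the highest
bidder `hb` ordered by increasing depth, followed by `hb` itself. -/
def seq (T : TreeNet α) (hb : α) : List α := T.ancList hb ++ [hb]

/-- `a_j`, as an `Option α`: `none` for `j = 0` (the owner `o`) and out of range. -/
def aIdx (T : TreeNet α) (hb : α) (j : ℕ) : Option α :=
  if j = 0 then none else (T.seq hb)[j - 1]?

/-- the required payment `p^{auc}_{a_j} = v^{(1)}_{V ∖ V_{a_j}}` (and `0` for `j = 0`). -/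
def pauc (T : TreeNet α) (V : Finset α) (val : α → ℝ) (hb : α) (j : ℕ) : ℝ :=
  match T.aIdx hb j with
  | none => 0
  | some i => vmax val (V \ T.sub V i)

/-- the children inside `V` of a vertex (`none` denotes the owner `o`). -/
def childrenOf (T : TreeNet α) (V : Finset α) (x : Option α) : Finset α :=
  V.filter fun y => T.parent y = x

/-- `X_j`: the set of children of `a_{j-1}`. -/
def X (T : TreeNet α) (V : Finset α) (hb : α) (j : ℕ) : Finset α :=
  T.childrenOf V (T.aIdx hb (j - 1))

/-- `n_{X_j} = Σ_{q ∈ X_j} n_q`. -/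
def nX (T : TreeNet α) (V : Finset α) (hb : α) (j : ℕ) : ℕ :=
  ∑ q ∈ T.X V hb j, T.nsub V q

/-- subtree of an optional vertex, with the convention `∅` for `none`. -/
def subO (T : TreeNet α) (V : Finset α) : Option α → Finset α
  | none => ∅
  | some i => T.sub V i

/-- subtree of an optional vertex, with the convention `V` for the owner `o`. -/
def subUp (T : TreeNet α) (V : Finset α) : Option α → Finset α
  | none => V
  | some i => T.sub V i

/-- `S_{-q}` at step `j`, where `sel` selects a highest bidder in a given set
(`h' = sel (V ∖ V_q)` is a highest bidder without `q`'s participation). -/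
def Sneg (T : TreeNet α) (V : Finset α) (val : α → ℝ) (sel : Finset α → Option α)
    (hb : α) (j : ℕ) (q : α) : ℝ :=
  match sel (V \ T.sub V q) with
  | none => 0
  | some h' =>
      if T.aIdx h' (j - 1) = T.aIdx hb (j - 1) then
        vmax val (V \ (T.subO V (T.aIdx h' j) ∪ T.sub V q)) - T.pauc V val hb (j - 1)
      else 0

/-- the money `R_q = (n_q / n_{X_j}) ⬝ S_{-q}` redistributed to `q` in step `j`. -/
def R (T : TreeNet α) (V : Finset α) (val : α → ℝ) (sel : Finset α → Option α)
    (hb : α) (j : ℕ) (q : α) : ℝ :=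
  (T.nsub V q : ℝ) / (T.nX V hb j : ℝ) * T.Sneg V val sel hb j q

/-- the allocation condition `v̂_{a_j} ≥ p^{auc}_{a_j}` holds at step `j`. -/
def Stops (T : TreeNet α) (V : Finset α) (val : α → ℝ) (hb : α) (j : ℕ) : Prop :=
  ∃ i, T.aIdx hb j = some i ∧ T.pauc V val hb j ≤ val i

/-- the step `J` at which the procedure stops. -/
def stepJ (T : TreeNet α) (V : Finset α) (val : α → ℝ) (hb : α) : ℕ :=
  sInf {j | 1 ≤ j ∧ T.Stops V val hb j}

/-- the winner of the item. -/
def winner (T : TreeNet α) (V : Finset α) (val : α → ℝ) (hb : α) : Option α :=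
  T.aIdx hb (T.stepJ V val hb)

/-- the (first) step at which agent `i` is assigned a payment. -/
def stepOf (T : TreeNet α) (V : Finset α) (val : α → ℝ) (hb : α) (i : α) : ℕ :=
  sInf {j | 1 ≤ j ∧ j ≤ T.stepJ V val hb ∧ i ∈ T.X V hb j}

/-- the payment of agent `i` under NRM: the winner pays `p^{auc}_{a_J} - R_{a_J}`,
every other agent considered in some executed step `j` pays `-R_q`, and every
agent not assigned a payment pays `0`. -/
def pay (T : TreeNet α) (V : Finset α) (val : α → ℝ) (sel : Finset α → Option α)
    (hb : α) (i : α) : ℝ :=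
  if T.winner V val hb = some i then
    T.pauc V val hb (T.stepJ V val hb) - T.R V val sel hb (T.stepJ V val hb) i
  else if ∃ j, 1 ≤ j ∧ j ≤ T.stepJ V val hb ∧ i ∈ T.X V hb j then
    -T.R V val sel hb (T.stepOf V val hb i) i
  else 0

/-- the surplus `S = Σ_{i ∈ V} p_i` of the mechanism. -/
def surplus (T : TreeNet α) (V : Finset α) (val : α → ℝ) (sel : Finset α → Option α)
    (hb : α) : ℝ :=
  ∑ i ∈ V, T.pay V val sel hb i

/-- the utility of agent `i` whose true valuation is `tv`:
`tv` if she wins, minus her payment. -/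
def util (T : TreeNet α) (V : Finset α) (val : α → ℝ) (sel : Finset α → Option α)
    (hb : α) (tv : ℝ) (i : α) : ℝ :=
  (if T.winner V val hb = some i then tv else 0) - T.pay V val sel hb i

/-- the participant set `V` is closed under taking parents
(as is every set generated by invitation chains). -/
def Closed (T : TreeNet α) (V : Finset α) : Prop :=
  ∀ i ∈ V, ∀ j, T.parent i = some j → j ∈ V

/-- `hb` is a highest bidder of `V`. -/
def IsTop (V : Finset α) (val : α → ℝ) (hb : α) : Prop :=
  hb ∈ V ∧ ∀ i ∈ V, val i ≤ val hb

/-- `sel` selects a highest bidder of every nonempty finite set of agents. -/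
def SelValid (val : α → ℝ) (sel : Finset α → Option α) : Prop :=
  ∀ D : Finset α, (D.Nonempty → ∃ b, sel D = some b) ∧
    ∀ b, sel D = some b → b ∈ D ∧ ∀ x ∈ D, val x ≤ val b

/-- the true neighbour set of agent `i` that she may invite: her children. -/
def childrenAll (T : TreeNet α) (i : α) : Finset α :=
  Finset.univ.filter fun y => T.parent y = some i

/-- agent `i` is reached from the owner by the chains of invitations `inv`
(the owner informs all her neighbours, i.e. the agents with `parent = none`). -/
def Reached (T : TreeNet α) (inv : α → Finset α) (i : α) : Prop :=
  match h : T.parent i with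
  | none => True
  | some j => T.Reached inv j ∧ i ∈ inv j
termination_by T.depth i
decreasing_by
  have := T.depth_child i j h
  omega

/-- the participant set generated by the invitations `inv`. -/
def Vgen (T : TreeNet α) (inv : α → Finset α) : Finset α :=
  Finset.univ.filter fun i => T.Reached inv i

end TreeNet

namespace TreeNet

section Valuations

variable {α : Type} {val : α → ℝ}

lemma vmax_nonneg (hval : ∀ j, 0 ≤ val j) (D : Finset α) : 0 ≤ vmax val D := by
  unfold vmax
  split_ifs with hD
  · obtain ⟨x, hx⟩ := hD
    exact (hval x).trans (Finset.le_sup' val hx)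
  · exact le_rfl

lemma vmax_mono (hval : ∀ j, 0 ≤ val j) {A B : Finset α} (hAB : A ⊆ B) :
    vmax val A ≤ vmax val B := by
  rcases A.eq_empty_or_nonempty with rfl | hA
  · simpa [vmax] using vmax_nonneg hval B
  · simp only [vmax, dif_pos hA, dif_pos (hA.mono hAB)]
    exact Finset.sup'_le hA val fun a ha => Finset.le_sup' val (hAB ha)

end Valuations

variable {α : Type} [Fintype α] [DecidableEq α] (T : TreeNet α)

section Ancestors

lemma seq_of_parent_eq_none {i : α} (h : T.parent i = none) : T.seq i = [i] := by
  rw [seq, ancList.eq_def]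
  split <;> simp_all

lemma seq_of_parent_eq_some {i p : α} (h : T.parent i = some p) :
    T.seq i = T.seq p ++ [i] := by
  rw [seq, ancList.eq_def]
  split
  · simp_all
  · rename_i p' h'
    rw [h, Option.some.injEq] at h'
    rw [h', seq, List.append_assoc]

lemma seq_ne_nil (i : α) : T.seq i ≠ [] := by
  simp [seq]

lemma parent_of_mem_head?_seq (i : α) : ∀ x ∈ (T.seq i).head?, T.parent x = none := by
  cases h : T.parent i with
  | none => simpa [T.seq_of_parent_eq_none h] using h
  | some p =>
    rw [T.seq_of_parent_eq_some h, List.head?_append_of_ne_nil _ (T.seq_ne_nil p)]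
    exact parent_of_mem_head?_seq p
termination_by T.depth i
decreasing_by have := T.depth_child i p h; omega

lemma isChain_seq (i : α) : (T.seq i).IsChain (fun a b => T.parent b = some a) := by
  cases h : T.parent i with
  | none => simp [T.seq_of_parent_eq_none h]
  | some p =>
    rw [T.seq_of_parent_eq_some h]
    refine (isChain_seq p).append (.singleton i) ?_
    simpa [seq] using h
termination_by T.depth i
decreasing_by have := T.depth_child i p h; omega

@[simp]
lemma aIdx_zero (hb : α) : T.aIdx hb 0 = none := rfl

lemma parent_of_aIdx_eq_some {hb x : α} {j : ℕ} (hj : 1 ≤ j)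
    (hx : T.aIdx hb j = some x) : T.parent x = T.aIdx hb (j - 1) := by
  obtain ⟨m, rfl⟩ : ∃ m, j = m + 1 := ⟨j - 1, by omega⟩
  simp only [aIdx, Nat.add_one_ne_zero, if_false, Nat.add_sub_cancel] at hx ⊢
  cases m with
  | zero =>
    rw [← List.head?_eq_getElem?] at hx
    exact T.parent_of_mem_head?_seq hb x hx
  | succ m =>
    obtain ⟨hlt, rfl⟩ := List.getElem?_eq_some_iff.mp hx
    rw [if_neg (Nat.add_one_ne_zero m), Nat.add_sub_cancel,
      (T.isChain_seq hb).getElem m hlt, List.getElem?_eq_getElem]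

end Ancestors

section Subtrees

variable (V : Finset α)

lemma sub_subset_of_parent_eq_some {q a : α} (h : T.parent q = some a) :
    T.sub V q ⊆ T.sub V a := by
  intro y hy
  simp only [sub, Finset.mem_filter] at hy ⊢
  refine ⟨hy.1, Or.inr ?_⟩
  rcases hy.2 with rfl | ⟨m, hm, hit⟩
  · exact ⟨1, one_pos, by simp [h]⟩
  · refine ⟨m + 1, m.succ_pos, ?_⟩
    rw [Function.iterate_succ_apply', hit]
    simp [h]

lemma sub_subset_subUp_of_parent_eq {q : α} {a : Option α} (h : T.parent q = a) :
    T.sub V q ⊆ T.subUp V a := by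
  cases a with
  | none => exact Finset.filter_subset _ V
  | some a => exact T.sub_subset_of_parent_eq_some V h

lemma subO_aIdx_subset_subUp (hb : α) (j : ℕ) :
    T.subO V (T.aIdx hb j) ⊆ T.subUp V (T.aIdx hb (j - 1)) := by
  cases hx : T.aIdx hb j with
  | none => exact Finset.empty_subset _
  | some x =>
    have hj : 1 ≤ j := Nat.one_le_iff_ne_zero.mpr fun h0 => by simp [h0] at hx
    exact T.sub_subset_subUp_of_parent_eq V (T.parent_of_aIdx_eq_some hj hx)

/-- Treating the owner's "subtree" as all of `V` makes `p^{auc}_{a_0} = 0` a special case. -/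
lemma pauc_eq_vmax_sdiff_subUp (val : α → ℝ) (hb : α) (j : ℕ) :
    T.pauc V val hb j = vmax val (V \ T.subUp V (T.aIdx hb j)) := by
  unfold pauc
  cases T.aIdx hb j with
  | none => simp [subUp, vmax]
  | some x => rfl

end Subtrees

section Payments

variable (V : Finset α) {val : α → ℝ} (sel : Finset α → Option α) (hb : α)

lemma Sneg_nonneg (hval : ∀ j, 0 ≤ val j) {j : ℕ} {q : α}
    (hq : T.parent q = T.aIdx hb (j - 1)) : 0 ≤ T.Sneg V val sel hb j q := by
  unfold Sneg
  split
  · exact le_rfl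
  · rename_i h' _
    split_ifs with hpath
    · rw [sub_nonneg, T.pauc_eq_vmax_sdiff_subUp]
      refine vmax_mono hval (Finset.sdiff_subset_sdiff subset_rfl (Finset.union_subset ?_ ?_))
      · exact hpath ▸ T.subO_aIdx_subset_subUp V h' j
      · exact T.sub_subset_subUp_of_parent_eq V hq
    · exact le_rfl

lemma R_nonneg (hval : ∀ j, 0 ≤ val j) {j : ℕ} {q : α}
    (hq : T.parent q = T.aIdx hb (j - 1)) : 0 ≤ T.R V val sel hb j q :=
  mul_nonneg (div_nonneg (Nat.cast_nonneg _) (Nat.cast_nonneg _))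
    (T.Sneg_nonneg V sel hb hval hq)

lemma stops_stepJ_of_winner_eq_some {w : α} (hw : T.winner V val hb = some w) :
    1 ≤ T.stepJ V val hb ∧ T.Stops V val hb (T.stepJ V val hb) := by
  refine Nat.sInf_mem (s := {j | 1 ≤ j ∧ T.Stops V val hb j})
    (Set.nonempty_iff_ne_empty.mpr fun hempty => ?_)
  rw [winner, stepJ, hempty, Nat.sInf_empty] at hw
  simp at hw

lemma pauc_stepJ_le_of_winner_eq_some {w : α} (hw : T.winner V val hb = some w) :
    T.pauc V val hb (T.stepJ V val hb) ≤ val w := by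
  obtain ⟨-, x, hx, hle⟩ := T.stops_stepJ_of_winner_eq_some V hb hw
  rw [← winner, hw, Option.some.injEq] at hx
  exact hx ▸ hle

lemma util_of_winner_eq_some {w : α} (hw : T.winner V val hb = some w) (tv : ℝ) :
    T.util V val sel hb tv w =
      tv - T.pauc V val hb (T.stepJ V val hb) + T.R V val sel hb (T.stepJ V val hb) w := by
  rw [util, pay, if_pos hw, if_pos hw]
  ring

lemma util_of_winner_ne {i : α} (hi : T.winner V val hb ≠ some i) (tv : ℝ) :
    T.util V val sel hb tv i = -T.pay V val sel hb i := by
  rw [util, if_neg hi, zero_sub]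

lemma neg_pay_nonneg_of_winner_ne (hval : ∀ j, 0 ≤ val j) {i : α}
    (hi : T.winner V val hb ≠ some i) : 0 ≤ -T.pay V val sel hb i := by
  rw [pay, if_neg hi]
  split_ifs with hstep
  · obtain ⟨-, -, hX⟩ : T.stepOf V val hb i ∈
        {j | 1 ≤ j ∧ j ≤ T.stepJ V val hb ∧ i ∈ T.X V hb j} := Nat.sInf_mem hstep
    rw [neg_neg]
    exact T.R_nonneg V sel hb hval (Finset.mem_filter.mp hX).2
  · rw [neg_zero]

lemma util_nonneg (hval : ∀ j, 0 ≤ val j) {i : α} {tv : ℝ} (htv : val i = tv) :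
    0 ≤ T.util V val sel hb tv i := by
  by_cases hw : T.winner V val hb = some i
  · have hJ := (T.stops_stepJ_of_winner_eq_some V hb hw).1
    have hR := T.R_nonneg V sel hb hval (T.parent_of_aIdx_eq_some hJ hw)
    have hpauc := T.pauc_stepJ_le_of_winner_eq_some V hb hw
    rw [T.util_of_winner_eq_some V sel hb hw]
    linarith
  · rw [T.util_of_winner_ne V sel hb hw]
    exact T.neg_pay_nonneg_of_winner_ne V sel hb hval hw

end Payments

end TreeNet

theorem TreeNet.nrm_tree_individually_rational_general
    {α : Type} [Fintype α] [DecidableEq α] (T : TreeNet α)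
    (v : α → ℝ)                 -- the true valuations
    (i : α)
    (val : α → ℝ) (hval : ∀ j, 0 ≤ val j)           -- the reported valuations
    (hvi : val i = v i)                             -- i reports her true valuation
    (inv : α → Finset α)
    (sel : Finset α → Option α)
    (hb : α) :
    0 ≤ T.util (T.Vgen inv) val sel hb (v i) i ∧
    (T.winner (T.Vgen inv) val hb = some i →
      T.util (T.Vgen inv) val sel hb (v i) i =
        v i - T.pauc (T.Vgen inv) val hb (T.stepJ (T.Vgen inv) val hb)
          + T.R (T.Vgen inv) val sel hb (T.stepJ (T.Vgen inv) val hb) i) ∧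
    (T.winner (T.Vgen inv) val hb ≠ some i →
      T.util (T.Vgen inv) val sel hb (v i) i = -T.pay (T.Vgen inv) val sel hb i ∧
      0 ≤ -T.pay (T.Vgen inv) val sel hb i) :=
  ⟨T.util_nonneg _ sel hb hval hvi,
    fun hw => T.util_of_winner_eq_some _ sel hb hw (v i),
    fun hw => ⟨T.util_of_winner_ne _ sel hb hw (v i),
      T.neg_pay_nonneg_of_winner_ne _ sel hb hval hw⟩⟩

/-- The network-based redistribution mechanism in trees is
individually rational: every agent `i` who reports her true valuation
(`val i = v i`), whatever subset of her neighbours she invites and whatever the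
other agents report, has nonnegative utility under NRM.  Moreover every
non-winning agent's utility equals the redistribution `-p_i = R_i ≥ 0` she
receives, and the winner's utility equals `v_w - p^{auc}_w + R_w ≥ 0`. -/
theorem TreeNet.nrm_tree_individually_rational
    {α : Type} [Fintype α] [DecidableEq α] (T : TreeNet α)
    (v : α → ℝ) (hv : ∀ j, 0 ≤ v j)                 -- the true valuations
    (i : α)
    (val : α → ℝ) (hval : ∀ j, 0 ≤ val j)           -- the reported valuations
    (hvi : val i = v i)                             -- i reports her true valuation
    (inv : α → Finset α)
    (hinv : ∀ j, inv j ⊆ T.childrenAll j)           -- arbitrary invitations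
    (sel : Finset α → Option α) (hsel : TreeNet.SelValid val sel)
    (hb : α) (hhb : TreeNet.IsTop (T.Vgen inv) val hb) :
    0 ≤ T.util (T.Vgen inv) val sel hb (v i) i ∧
    (T.winner (T.Vgen inv) val hb = some i →
      T.util (T.Vgen inv) val sel hb (v i) i =
        v i - T.pauc (T.Vgen inv) val hb (T.stepJ (T.Vgen inv) val hb)
          + T.R (T.Vgen inv) val sel hb (T.stepJ (T.Vgen inv) val hb) i) ∧
    (T.winner (T.Vgen inv) val hb ≠ some i →
      T.util (T.Vgen inv) val sel hb (v i) i = -T.pay (T.Vgen inv) val sel hb i ∧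
      0 ≤ -T.pay (T.Vgen inv) val sel hb i) :=
  TreeNet.nrm_tree_individually_rational_general T v i val hval hvi inv sel hb
end
end

section
/- The Cavallo mechanism extended to social networks disincentivizes diffusion: there exists a social network, a truthful report profile θ̂, and an agent who strictly increases her utility by not inviting a neighbour. Concretely, take owner o with neighbours a, b, c where a has a further neighbour d and c has a further neighbour e, with valuations v_a = 2, v_b = 3, v_c = 4, v_d = v_e = 0: under full invitation the redistribution to a is 3/5 and to c is 2/5, while if a does not invite d and c does not invite e the allocation and VCG payments are unchanged but a's redistribution rises to 1 > 3/5 and c's to 2/3 > 2/5; hence a (and c) strictly gains by withholding an invitation. -/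
open Finset

attribute [local instance] Classical.propDecidable

noncomputable section

namespace TreeNet

variable {α : Type} [Fintype α] [DecidableEq α]

/-- the VCG payment of agent `i` when the item is allocated to the highest
bidder `w`: `p^{VCG}_i = SW(θ̂₋ᵢ) - (SW(θ̂) - π_i(θ̂) v̂_i)`, where `θ̂₋ᵢ`
removes `i` together with every agent reachable from the owner only through
`i`, and the social welfare is the highest reported valuation. -/
def vcgPay (T : TreeNet α) (V : Finset α) (val : α → ℝ) (w i : α) : ℝ :=
  vmax val (V \ T.sub V i) - (vmax val V - if i = w then val i else 0)

/-- the surplus of the VCG stage. -/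
def vcgSurplus (T : TreeNet α) (V : Finset α) (val : α → ℝ) (w : α) : ℝ :=
  ∑ i ∈ V, T.vcgPay V val w i

/-- `S^{VCG}_i`: the minimum, over all possible reported valuations of `i`
(and all choices of a highest bidder), of the resulting VCG surplus. -/
def Svcg (T : TreeNet α) (V : Finset α) (val : α → ℝ) (i : α) : ℝ :=
  sInf {s : ℝ | ∃ x : ℝ, 0 ≤ x ∧ ∃ w ∈ V,
    (∀ j ∈ V, Function.update val i x j ≤ Function.update val i x w) ∧
    s = T.vcgSurplus V (Function.update val i x) w}

/-- the redistribution `p^{re}_i = S^{VCG}_i / n` received by agent `i`. -/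
def reDist (T : TreeNet α) (V : Finset α) (val : α → ℝ) (i : α) : ℝ :=
  T.Svcg V val i / (V.card : ℝ)

/-- the net payment `p_i = p^{VCG}_i - p^{re}_i` of agent `i` in the Cavallo
mechanism extended to networks (`w` is the chosen highest bidder). -/
def cavPay (T : TreeNet α) (V : Finset α) (val : α → ℝ) (w i : α) : ℝ :=
  T.vcgPay V val w i - T.reDist V val i

/-- the surplus `S(θ̂) = Σ_{i ∈ V} p_i(θ̂)` of the Cavallo mechanism. -/
def cavSurplus (T : TreeNet α) (V : Finset α) (val : α → ℝ) (w : α) : ℝ :=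
  ∑ i ∈ V, T.cavPay V val w i

/-- the utility `π_i(θ̂) v_i - p_i(θ̂)` of agent `i` with true valuation `tv`. -/
def cavUtil (T : TreeNet α) (V : Finset α) (val : α → ℝ) (w : α) (tv : ℝ) (i : α) : ℝ :=
  (if i = w then tv else 0) - T.cavPay V val w i

end TreeNet

/-- the concrete network of Proposition 2: the owner `o` has the neighbours
`a = 0`, `b = 1`, `c = 2`; agent `a` has the further neighbour `d = 3` and
agent `c` has the further neighbour `e = 4`. -/
def cavalloDiffNet : TreeNet (Fin 5) where
  parent := ![none, none, none, some 0, some 2]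
  depth := ![0, 0, 0, 1, 1]
  depth_root := by decide
  depth_child := by decide

/-- the truthful valuations `v_a = 2, v_b = 3, v_c = 4, v_d = v_e = 0`. -/
def cavalloDiffVal : Fin 5 → ℝ := ![2, 3, 4, 0, 0]

/-- the participant set generated when `a` does not invite `d` and `c` does not
invite `e`: only `a, b, c` participate. -/
def cavalloDiffV' : Finset (Fin 5) := {0, 1, 2}

attribute [local simp] Matrix.cons_val_two Matrix.cons_val_three Matrix.cons_val_four Matrix.vecHead Matrix.vecTail

namespace TreeNet
lemma iter_none (m : ℕ) :
    (fun x : Option (Fin 5) => x.bind cavalloDiffNet.parent)^[m] none = none :=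
  Function.iterate_fixed rfl m

lemma anc_iff (j i : Fin 5) :
    cavalloDiffNet.StrictAnc j i ↔ (i = 3 ∧ j = 0) ∨ (i = 4 ∧ j = 2) := by
  have key : ∀ p q : Fin 5, cavalloDiffNet.parent p = some q →
      ((p = 3 ∧ q = 0) ∨ (p = 4 ∧ q = 2)) ∧ cavalloDiffNet.parent q = none := by decide
  constructor
  · rintro ⟨m, hm, h⟩
    obtain ⟨m', rfl⟩ : ∃ m', m = m' + 1 := ⟨m - 1, (Nat.succ_pred_eq_of_pos hm).symm⟩
    rw [Function.iterate_succ_apply] at h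
    have h' : (fun x : Option (Fin 5) => x.bind cavalloDiffNet.parent)^[m']
        (cavalloDiffNet.parent i) = some j := h
    cases hp : cavalloDiffNet.parent i with
    | none => rw [hp, iter_none] at h'; exact absurd h' (by simp)
    | some k =>
      rw [hp] at h'
      rcases m' with _ | m''
      · simp only [Function.iterate_zero, id_eq, Option.some.injEq] at h'
        obtain ⟨hc, _⟩ := key i k hp
        subst h'
        exact hc
      · rw [Function.iterate_succ_apply,
          show (Option.bind (some k) cavalloDiffNet.parent) = cavalloDiffNet.parent k from rfl,
          (key i k hp).2, iter_none] at h'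
        exact absurd h' (by simp)
  · rintro (⟨rfl, rfl⟩ | ⟨rfl, rfl⟩) <;> exact ⟨1, one_pos, rfl⟩
end TreeNet

namespace TreeNet
lemma sub_univ_0 : cavalloDiffNet.sub univ 0 = {0, 3} := by
  ext x; fin_cases x <;> simp [TreeNet.sub, TreeNet.anc_iff]
lemma sub_univ_1 : cavalloDiffNet.sub univ 1 = {1} := by
  ext x; fin_cases x <;> simp [TreeNet.sub, TreeNet.anc_iff]
lemma sub_univ_2 : cavalloDiffNet.sub univ 2 = {2, 4} := by
  ext x; fin_cases x <;> simp [TreeNet.sub, TreeNet.anc_iff]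
lemma sub_univ_3 : cavalloDiffNet.sub univ 3 = {3} := by
  ext x; fin_cases x <;> simp [TreeNet.sub, TreeNet.anc_iff]
lemma sub_univ_4 : cavalloDiffNet.sub univ 4 = {4} := by
  ext x; fin_cases x <;> simp [TreeNet.sub, TreeNet.anc_iff]
lemma sub_V'_0 : cavalloDiffNet.sub ({0,1,2} : Finset (Fin 5)) 0 = {0} := by
  ext x; fin_cases x <;> simp [TreeNet.sub, TreeNet.anc_iff]
lemma sub_V'_1 : cavalloDiffNet.sub ({0,1,2} : Finset (Fin 5)) 1 = {1} := by
  ext x; fin_cases x <;> simp [TreeNet.sub, TreeNet.anc_iff]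
lemma sub_V'_2 : cavalloDiffNet.sub ({0,1,2} : Finset (Fin 5)) 2 = {2} := by
  ext x; fin_cases x <;> simp [TreeNet.sub, TreeNet.anc_iff]
end TreeNet

namespace TreeNet
lemma surplus_univ (val : Fin 5 → ℝ) (w : Fin 5) :
    cavalloDiffNet.vcgSurplus univ val w =
      vmax val {1,2,4} + vmax val {0,2,3,4} + vmax val {0,1,3} + vmax val {0,1,2,4}
        + vmax val {0,1,2,3} - 5 * vmax val univ + val w := by
  unfold vcgSurplus vcgPay
  rw [Fin.sum_univ_five, sub_univ_0, sub_univ_1, sub_univ_2, sub_univ_3, sub_univ_4,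
    show (univ : Finset (Fin 5)) \ {0,3} = {1,2,4} by decide,
    show (univ : Finset (Fin 5)) \ {1} = {0,2,3,4} by decide,
    show (univ : Finset (Fin 5)) \ {2,4} = {0,1,3} by decide,
    show (univ : Finset (Fin 5)) \ {3} = {0,1,2,4} by decide,
    show (univ : Finset (Fin 5)) \ {4} = {0,1,2,3} by decide]
  fin_cases w <;> simp <;> ring

lemma surplus_V' (val : Fin 5 → ℝ) (w : Fin 5) :
    cavalloDiffNet.vcgSurplus cavalloDiffV' val w =
      vmax val {1,2} + vmax val {0,2} + vmax val {0,1}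
        - 3 * vmax val cavalloDiffV' + (if 0 = w then val 0 else 0)
        + (if 1 = w then val 1 else 0) + (if 2 = w then val 2 else 0) := by
  unfold vcgSurplus vcgPay
  rw [show (cavalloDiffV' : Finset (Fin 5)) = {0,1,2} from rfl]
  rw [Finset.sum_insert (by decide), Finset.sum_insert (by decide), Finset.sum_singleton]
  rw [sub_V'_0, sub_V'_1, sub_V'_2,
    show ({0,1,2} : Finset (Fin 5)) \ {0} = {1,2} by decide,
    show ({0,1,2} : Finset (Fin 5)) \ {1} = {0,2} by decide,
    show ({0,1,2} : Finset (Fin 5)) \ {2} = {0,1} by decide]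
  ring
end TreeNet

namespace TreeNet

lemma univ5 : (univ : Finset (Fin 5)) = {0,1,2,3,4} := by decide

lemma updA (x : ℝ) : Function.update cavalloDiffVal 0 x = ![x,3,4,0,0] := by
  funext j; fin_cases j <;> simp [cavalloDiffVal, Function.update]

lemma updC (x : ℝ) : Function.update cavalloDiffVal 2 x = ![2,3,x,0,0] := by
  funext j; fin_cases j <;> simp [cavalloDiffVal, Function.update]

end TreeNet

namespace TreeNet

lemma Svcg_univ_0 : cavalloDiffNet.Svcg univ cavalloDiffVal 0 = 3 := by
  unfold Svcg
  set S := {s : ℝ | ∃ x : ℝ, 0 ≤ x ∧ ∃ w ∈ (univ : Finset (Fin 5)),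
      (∀ j ∈ (univ : Finset (Fin 5)), Function.update cavalloDiffVal 0 x j ≤
        Function.update cavalloDiffVal 0 x w) ∧
      s = cavalloDiffNet.vcgSurplus univ (Function.update cavalloDiffVal 0 x) w} with hS
  have hmem : (3:ℝ) ∈ S := by
    refine ⟨0, le_refl 0, 2, mem_univ 2, ?_, ?_⟩
    · intro j _; rw [updA]; fin_cases j <;> norm_num
    · rw [surplus_univ, univ5, updA]
      norm_num [TreeNet.vmax]
  have hlb : ∀ s ∈ S, (3:ℝ) ≤ s := by
    rintro s ⟨x, hx, w, hwV, hw, rfl⟩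
    rw [updA] at hw ⊢
    have e1 : vmax ![x,3,4,0,0] {1,2,4} = 4 := by
      simp [TreeNet.vmax]; all_goals (first | (simp only [max_def]; split_ifs <;> linarith) | linarith)
    have e2 : vmax ![x,3,4,0,0] {0,2,3,4} = max x 4 := by
      simp [TreeNet.vmax]; all_goals (first | (simp only [max_def]; split_ifs <;> linarith) | linarith)
    have e3 : vmax ![x,3,4,0,0] {0,1,3} = max x 3 := by
      simp [TreeNet.vmax]; all_goals (first | (simp only [max_def]; split_ifs <;> linarith) | linarith)
    have e4 : vmax ![x,3,4,0,0] {0,1,2,4} = max x 4 := by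
      simp [TreeNet.vmax]; all_goals (first | (simp only [max_def]; split_ifs <;> linarith) | linarith)
    have e5 : vmax ![x,3,4,0,0] {0,1,2,3} = max x 4 := by
      simp [TreeNet.vmax]; all_goals (first | (simp only [max_def]; split_ifs <;> linarith) | linarith)
    have e6 : vmax ![x,3,4,0,0] univ = max x 4 := by
      rw [univ5]; simp [TreeNet.vmax]; all_goals (first | (simp only [max_def]; split_ifs <;> linarith) | linarith)
    have hvw : (![x,3,4,0,0] : Fin 5 → ℝ) w = max x 4 := by
      have h0 := hw 0 (mem_univ 0)
      have h2 := hw 2 (mem_univ 2)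
      norm_num at h0 h2
      have hub : (![x,3,4,0,0] : Fin 5 → ℝ) w ≤ max x 4 := by
        fin_cases w <;> norm_num <;> all_goals (first | (simp only [max_def]; split_ifs <;> linarith) | linarith)
      exact le_antisymm hub (max_le h0 h2)
    rw [surplus_univ, e1, e2, e3, e4, e5, e6, hvw]
    have h1 : x ≤ max x 3 := le_max_left _ _
    have h2 : (3:ℝ) ≤ max x 3 := le_max_right _ _
    have h3 : max x 4 ≤ max x 3 + 1 := max_le (by linarith) (by linarith)
    linarith
  exact le_antisymm (csInf_le ⟨3, fun s hs => hlb s hs⟩ hmem) (le_csInf ⟨3, hmem⟩ hlb)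

end TreeNet

namespace TreeNet

lemma Svcg_univ_2 : cavalloDiffNet.Svcg univ cavalloDiffVal 2 = 2 := by
  unfold Svcg
  set S := {s : ℝ | ∃ x : ℝ, 0 ≤ x ∧ ∃ w ∈ (univ : Finset (Fin 5)),
      (∀ j ∈ (univ : Finset (Fin 5)), Function.update cavalloDiffVal 2 x j ≤
        Function.update cavalloDiffVal 2 x w) ∧
      s = cavalloDiffNet.vcgSurplus univ (Function.update cavalloDiffVal 2 x) w} with hS
  have hmem : (2:ℝ) ∈ S := by
    refine ⟨0, le_refl 0, 1, mem_univ 1, ?_, ?_⟩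
    · intro j _; rw [updC]; fin_cases j <;> norm_num
    · rw [surplus_univ, univ5, updC]
      norm_num [TreeNet.vmax]
  have hlb : ∀ s ∈ S, (2:ℝ) ≤ s := by
    rintro s ⟨x, hx, w, hwV, hw, rfl⟩
    rw [updC] at hw ⊢
    have e1 : vmax ![2,3,x,0,0] {1,2,4} = max x 3 := by
      simp [TreeNet.vmax]; all_goals (first | (simp only [max_def]; split_ifs <;> linarith) | linarith)
    have e2 : vmax ![2,3,x,0,0] {0,2,3,4} = max x 2 := by
      simp [TreeNet.vmax]; all_goals (first | (simp only [max_def]; split_ifs <;> linarith) | linarith)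
    have e3 : vmax ![2,3,x,0,0] {0,1,3} = 3 := by
      simp [TreeNet.vmax]; all_goals (first | (simp only [max_def]; split_ifs <;> linarith) | linarith)
    have e4 : vmax ![2,3,x,0,0] {0,1,2,4} = max x 3 := by
      simp [TreeNet.vmax]; all_goals (first | (simp only [max_def]; split_ifs <;> linarith) | linarith)
    have e5 : vmax ![2,3,x,0,0] {0,1,2,3} = max x 3 := by
      simp [TreeNet.vmax]; all_goals (first | (simp only [max_def]; split_ifs <;> linarith) | linarith)
    have e6 : vmax ![2,3,x,0,0] univ = max x 3 := by
      rw [univ5]; simp [TreeNet.vmax]; all_goals (first | (simp only [max_def]; split_ifs <;> linarith) | linarith)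
    have hvw : (![2,3,x,0,0] : Fin 5 → ℝ) w = max x 3 := by
      have h1 := hw 1 (mem_univ 1)
      have h2 := hw 2 (mem_univ 2)
      norm_num at h1 h2
      have hub : (![2,3,x,0,0] : Fin 5 → ℝ) w ≤ max x 3 := by
        fin_cases w <;> norm_num <;> all_goals (first | (simp only [max_def]; split_ifs <;> linarith) | linarith)
      exact le_antisymm hub (max_le h2 h1)
    rw [surplus_univ, e1, e2, e3, e4, e5, e6, hvw]
    have h1 : x ≤ max x 2 := le_max_left _ _
    have h2 : (2:ℝ) ≤ max x 2 := le_max_right _ _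
    have h3 : max x 3 ≤ max x 2 + 1 := max_le (by linarith) (by linarith)
    linarith
  exact le_antisymm (csInf_le ⟨2, fun s hs => hlb s hs⟩ hmem) (le_csInf ⟨2, hmem⟩ hlb)

lemma Svcg_V'_0 : cavalloDiffNet.Svcg cavalloDiffV' cavalloDiffVal 0 = 3 := by
  unfold Svcg
  set S := {s : ℝ | ∃ x : ℝ, 0 ≤ x ∧ ∃ w ∈ cavalloDiffV',
      (∀ j ∈ cavalloDiffV', Function.update cavalloDiffVal 0 x j ≤
        Function.update cavalloDiffVal 0 x w) ∧
      s = cavalloDiffNet.vcgSurplus cavalloDiffV' (Function.update cavalloDiffVal 0 x) w} with hS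
  have hmem : (3:ℝ) ∈ S := by
    refine ⟨0, le_refl 0, 2, by decide, ?_, ?_⟩
    · intro j hj; rw [updA]; fin_cases hj <;> norm_num
    · rw [surplus_V', updA,
        show (cavalloDiffV' : Finset (Fin 5)) = {0,1,2} from rfl,
        if_neg (show ¬(0:Fin 5) = 2 by decide), if_neg (show ¬(1:Fin 5) = 2 by decide),
        if_pos rfl]
      norm_num [TreeNet.vmax]
  have hlb : ∀ s ∈ S, (3:ℝ) ≤ s := by
    rintro s ⟨x, hx, w, hwV, hw, rfl⟩
    rw [updA] at hw ⊢
    have e1 : vmax ![x,3,4,0,0] {1,2} = 4 := by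
      simp [TreeNet.vmax]; all_goals (first | (simp only [max_def]; split_ifs <;> linarith) | linarith)
    have e2 : vmax ![x,3,4,0,0] {0,2} = max x 4 := by
      simp [TreeNet.vmax]; all_goals (first | (simp only [max_def]; split_ifs <;> linarith) | linarith)
    have e3 : vmax ![x,3,4,0,0] {0,1} = max x 3 := by
      simp [TreeNet.vmax]; all_goals (first | (simp only [max_def]; split_ifs <;> linarith) | linarith)
    have e4 : vmax ![x,3,4,0,0] cavalloDiffV' = max x 4 := by
      rw [show (cavalloDiffV' : Finset (Fin 5)) = {0,1,2} from rfl]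
      simp [TreeNet.vmax]; all_goals (first | (simp only [max_def]; split_ifs <;> linarith) | linarith)
    obtain rfl | rfl | rfl : w = 0 ∨ w = 1 ∨ w = 2 := by
      fin_cases hwV
      exacts [Or.inl rfl, Or.inr (Or.inl rfl), Or.inr (Or.inr rfl)]
    · have h2 := hw 2 (by decide)
      norm_num at h2
      rw [surplus_V', e1, e2, e3, e4]
      norm_num [Fin.ext_iff]
      rw [max_eq_left (show (4:ℝ) ≤ x by linarith), max_eq_left (show (3:ℝ) ≤ x by linarith)]
      linarith
    · have h2 := hw 2 (by decide)
      norm_num at h2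
    · have h0 := hw 0 (by decide)
      norm_num at h0
      rw [surplus_V', e1, e2, e3, e4]
      norm_num [Fin.ext_iff]
      rw [max_eq_right (show x ≤ (4:ℝ) by linarith)]
      linarith [le_max_right x (3:ℝ)]
  exact le_antisymm (csInf_le ⟨3, fun s hs => hlb s hs⟩ hmem) (le_csInf ⟨3, hmem⟩ hlb)

lemma Svcg_V'_2 : cavalloDiffNet.Svcg cavalloDiffV' cavalloDiffVal 2 = 2 := by
  unfold Svcg
  set S := {s : ℝ | ∃ x : ℝ, 0 ≤ x ∧ ∃ w ∈ cavalloDiffV',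
      (∀ j ∈ cavalloDiffV', Function.update cavalloDiffVal 2 x j ≤
        Function.update cavalloDiffVal 2 x w) ∧
      s = cavalloDiffNet.vcgSurplus cavalloDiffV' (Function.update cavalloDiffVal 2 x) w} with hS
  have hmem : (2:ℝ) ∈ S := by
    refine ⟨0, le_refl 0, 1, by decide, ?_, ?_⟩
    · intro j hj; rw [updC]; fin_cases hj <;> norm_num
    · rw [surplus_V', updC,
        show (cavalloDiffV' : Finset (Fin 5)) = {0,1,2} from rfl,
        if_neg (show ¬(0:Fin 5) = 1 by decide), if_pos rfl,
        if_neg (show ¬(2:Fin 5) = 1 by decide)]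
      norm_num [TreeNet.vmax]
  have hlb : ∀ s ∈ S, (2:ℝ) ≤ s := by
    rintro s ⟨x, hx, w, hwV, hw, rfl⟩
    rw [updC] at hw ⊢
    have e1 : vmax ![2,3,x,0,0] {1,2} = max x 3 := by
      simp [TreeNet.vmax]; all_goals (first | (simp only [max_def]; split_ifs <;> linarith) | linarith)
    have e2 : vmax ![2,3,x,0,0] {0,2} = max x 2 := by
      simp [TreeNet.vmax]; all_goals (first | (simp only [max_def]; split_ifs <;> linarith) | linarith)
    have e3 : vmax ![2,3,x,0,0] {0,1} = 3 := by
      simp [TreeNet.vmax]; all_goals (first | (simp only [max_def]; split_ifs <;> linarith) | linarith)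
    have e4 : vmax ![2,3,x,0,0] cavalloDiffV' = max x 3 := by
      rw [show (cavalloDiffV' : Finset (Fin 5)) = {0,1,2} from rfl]
      simp [TreeNet.vmax]; all_goals (first | (simp only [max_def]; split_ifs <;> linarith) | linarith)
    obtain rfl | rfl | rfl : w = 0 ∨ w = 1 ∨ w = 2 := by
      fin_cases hwV
      exacts [Or.inl rfl, Or.inr (Or.inl rfl), Or.inr (Or.inr rfl)]
    · have h1 := hw 1 (by decide)
      norm_num at h1
    · have h2 := hw 2 (by decide)
      norm_num at h2
      rw [surplus_V', e1, e2, e3, e4]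
      norm_num [Fin.ext_iff]
      rw [max_eq_right (show x ≤ (3:ℝ) by linarith)]
      linarith [le_max_right x (2:ℝ)]
    · have h1 := hw 1 (by decide)
      norm_num at h1
      rw [surplus_V', e1, e2, e3, e4]
      norm_num [Fin.ext_iff]
      rw [max_eq_left (show (3:ℝ) ≤ x by linarith), max_eq_left (show (2:ℝ) ≤ x by linarith)]
      linarith
  exact le_antisymm (csInf_le ⟨2, fun s hs => hlb s hs⟩ hmem) (le_csInf ⟨2, hmem⟩ hlb)

end TreeNet

namespace TreeNet

lemma payA : cavalloDiffNet.vcgPay univ cavalloDiffVal 2 0 = 0 := by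
  unfold vcgPay
  rw [sub_univ_0, show (univ : Finset (Fin 5)) \ {0,3} = {1,2,4} by decide, univ5,
    if_neg (show ¬(0:Fin 5) = 2 by decide)]
  norm_num [TreeNet.vmax, cavalloDiffVal]

lemma payC : cavalloDiffNet.vcgPay univ cavalloDiffVal 2 2 = 3 := by
  unfold vcgPay
  rw [sub_univ_2, show (univ : Finset (Fin 5)) \ {2,4} = {0,1,3} by decide, univ5,
    if_pos rfl]
  norm_num [TreeNet.vmax, cavalloDiffVal]

lemma payA' : cavalloDiffNet.vcgPay cavalloDiffV' cavalloDiffVal 2 0 = 0 := by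
  unfold vcgPay
  rw [show (cavalloDiffV' : Finset (Fin 5)) = {0,1,2} from rfl, sub_V'_0,
    show ({0,1,2} : Finset (Fin 5)) \ {0} = {1,2} by decide,
    if_neg (show ¬(0:Fin 5) = 2 by decide)]
  norm_num [TreeNet.vmax, cavalloDiffVal]

lemma payC' : cavalloDiffNet.vcgPay cavalloDiffV' cavalloDiffVal 2 2 = 3 := by
  unfold vcgPay
  rw [show (cavalloDiffV' : Finset (Fin 5)) = {0,1,2} from rfl, sub_V'_2,
    show ({0,1,2} : Finset (Fin 5)) \ {2} = {0,1} by decide, if_pos rfl]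
  norm_num [TreeNet.vmax, cavalloDiffVal]

lemma reA : cavalloDiffNet.reDist univ cavalloDiffVal 0 = 3/5 := by
  unfold reDist; rw [Svcg_univ_0]; norm_num
lemma reC : cavalloDiffNet.reDist univ cavalloDiffVal 2 = 2/5 := by
  unfold reDist; rw [Svcg_univ_2]; norm_num
lemma reA' : cavalloDiffNet.reDist cavalloDiffV' cavalloDiffVal 0 = 1 := by
  unfold reDist; rw [Svcg_V'_0, show cavalloDiffV'.card = 3 from rfl]; norm_num
lemma reC' : cavalloDiffNet.reDist cavalloDiffV' cavalloDiffVal 2 = 2/3 := by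
  unfold reDist; rw [Svcg_V'_2, show cavalloDiffV'.card = 3 from rfl]; norm_num

end TreeNet


/-- The Cavallo mechanism extended to social networks
disincentivizes diffusion: there is a social network, a truthful report profile
and an agent who strictly increases her utility by not inviting a neighbour.
Concretely, on the network where the owner has neighbours `a, b, c`, `a` has a
further neighbour `d` and `c` a further neighbour `e`, with valuations
`v_a = 2, v_b = 3, v_c = 4, v_d = v_e = 0`: under full invitation the
redistribution to `a` is `3/5` and to `c` is `2/5`, while if `a` does not
invite `d` and `c` does not invite `e` the allocation and the VCG payments are
unchanged but `a`'s redistribution rises to `1 > 3/5` and `c`'s to `2/3 > 2/5`;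
hence `a` (and `c`) strictly gains by withholding an invitation. -/
theorem cavallo_mechanism_disincentivizes_diffusion :
    (∀ i, 0 ≤ cavalloDiffVal i) ∧
    (∃ w, TreeNet.IsTop (univ : Finset (Fin 5)) cavalloDiffVal w) ∧
    (∃ w', TreeNet.IsTop cavalloDiffV' cavalloDiffVal w') ∧
    ∀ w, TreeNet.IsTop (univ : Finset (Fin 5)) cavalloDiffVal w →
    ∀ w', TreeNet.IsTop cavalloDiffV' cavalloDiffVal w' →
      -- the allocation is unchanged: c wins in both cases
      w = 2 ∧ w' = 2 ∧
      -- the redistributions under full invitation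
      cavalloDiffNet.reDist univ cavalloDiffVal 0 = 3 / 5 ∧
      cavalloDiffNet.reDist univ cavalloDiffVal 2 = 2 / 5 ∧
      -- the redistributions after withholding the invitations
      cavalloDiffNet.reDist cavalloDiffV' cavalloDiffVal 0 = 1 ∧
      cavalloDiffNet.reDist cavalloDiffV' cavalloDiffVal 2 = 2 / 3 ∧
      -- the VCG payments of a and c are unchanged
      cavalloDiffNet.vcgPay univ cavalloDiffVal w 0 =
        cavalloDiffNet.vcgPay cavalloDiffV' cavalloDiffVal w' 0 ∧
      cavalloDiffNet.vcgPay univ cavalloDiffVal w 2 =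
        cavalloDiffNet.vcgPay cavalloDiffV' cavalloDiffVal w' 2 ∧
      -- a and c strictly gain by withholding an invitation
      cavalloDiffNet.cavUtil univ cavalloDiffVal w (cavalloDiffVal 0) 0 <
        cavalloDiffNet.cavUtil cavalloDiffV' cavalloDiffVal w' (cavalloDiffVal 0) 0 ∧
      cavalloDiffNet.cavUtil univ cavalloDiffVal w (cavalloDiffVal 2) 2 <
        cavalloDiffNet.cavUtil cavalloDiffV' cavalloDiffVal w' (cavalloDiffVal 2) 2 := by
  refine ⟨?_, ⟨2, mem_univ 2, ?_⟩, ⟨2, by decide, ?_⟩, ?_⟩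
  · intro i; fin_cases i <;> norm_num [cavalloDiffVal]
  · intro i _; fin_cases i <;> norm_num [cavalloDiffVal]
  · intro i hi; fin_cases hi <;> norm_num [cavalloDiffVal]
  · intro w hw w' hw'
    have hw2 : w = 2 := by
      have h := hw.2 2 (mem_univ 2)
      fin_cases w <;> first | rfl | (norm_num [cavalloDiffVal] at h)
    have hw2' : w' = 2 := by
      have h := hw'.2 2 (by decide)
      have h1 := hw'.1
      fin_cases w' <;>
        first | rfl | (norm_num [cavalloDiffVal] at h) | (exact absurd h1 (by decide))
    subst hw2 hw2'
    refine ⟨rfl, rfl, TreeNet.reA, TreeNet.reC, TreeNet.reA', TreeNet.reC', ?_, ?_, ?_, ?_⟩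
    · rw [TreeNet.payA, TreeNet.payA']
    · rw [TreeNet.payC, TreeNet.payC']
    · unfold TreeNet.cavUtil TreeNet.cavPay
      rw [TreeNet.payA, TreeNet.payA', TreeNet.reA, TreeNet.reA',
        if_neg (show ¬(0:Fin 5) = 2 by decide)]
      norm_num
    · unfold TreeNet.cavUtil TreeNet.cavPay
      rw [TreeNet.payC, TreeNet.payC', TreeNet.reC, TreeNet.reC', if_pos rfl]
      norm_num
end
end
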